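/- Let S ⊆ ℝⁿ be measurable, let α : ℝⁿ × ℝⁿ → ℝⁿ be antisymmetric (α(x,y) = -α(y,x) for all x,y), and let u : ℝⁿ → ℝ. Then for every x for which the integrand is integrable in y over S, the composition of the nonlocal divergence with the nonlocal gradient adjoint is given explicitly by D_S(D*u)(x) = 2 ∫_S (u(x) − u(y)) |α(x,y)|² dy. -/
import Mathlib


open MeasureTheory RealInnerProductSpace

/-- Euclidean space `ℝⁿ`. -/
abbrev Euc (n : ℕ) := EuclideanSpace ℝ (Fin n)

/-- The nonlocal divergence over `S`: `D_S(f)(x) := ∫_S (f(x,y) + f(y,x)) · α(x,y) dy`. -/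
noncomputable def nldivS {n : ℕ} (S : Set (Euc n)) (a f : Euc n → Euc n → Euc n)
    (x : Euc n) : ℝ :=
  ∫ y in S, ⟪f x y + f y x, a x y⟫

/-- The nonlocal gradient adjoint: `(D*u)(x,y) := -(u(y) - u(x)) α(x,y)`. -/
noncomputable def nlgrad {n : ℕ} (a : Euc n → Euc n → Euc n) (u : Euc n → ℝ)
    (x y : Euc n) : Euc n :=
  -(u y - u x) • a x y

/-- The nonlocal Laplacian: for antisymmetric `α`,
`D_S(D*u)(x) = 2 ∫_S (u(x) − u(y)) |α(x,y)|² dy`. -/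
theorem nldivS_nlgrad_explicit {n : ℕ}
    (S : Set (Euc n)) (hS : MeasurableSet S)
    (a : Euc n → Euc n → Euc n)
    (ha : ∀ x y, a x y = - a y x)
    (u : Euc n → ℝ)
    (x : Euc n)
    (hint : IntegrableOn (fun y => (u x - u y) * ‖a x y‖ ^ 2) S) :
    nldivS S a (nlgrad a u) x = 2 * ∫ y in S, (u x - u y) * ‖a x y‖ ^ 2 := by
  unfold nldivS nlgrad
  rw [← MeasureTheory.integral_const_mul]
  congr 1 with y
  rw [ha y x]
  have : (-(u y - u x)) • a x y + -(u x - u y) • -a x y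
      = (2 * (u x - u y)) • a x y := by
    module
  rw [this, real_inner_smul_left, real_inner_self_eq_norm_sq]
  ring
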